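/- Hardy inequality near infinity: let s > -1, let 0 < a < b, and f : [a,b] → ℝ be C¹. Then ∫_a^b x^{s} f(x)² dx ≤ (4/(s+1)²) ∫_a^b x^{s+2} f'(x)² dx + (2/(s+1)) b^{s+1} f(b)². -/

import Mathlib

/-!
Since `(x^{s+1} f²/(s+1))' = x^s f² + (2/(s+1)) x^{s+1} f f'`, completing the square gives the
pointwise bound `x^s f² ≤ 2 (x^{s+1} f²/(s+1))' + (4/(s+1)²) x^{s+2} f'²`. Integrating it over
`[a,b]` and dropping the nonpositive boundary term at `a` yields the inequality.
-/

open MeasureTheory Set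

lemma rpow_mul_sq_le_two_mul_add {s x : ℝ} (hs : s + 1 ≠ 0) (hx : 0 < x) (u v : ℝ) :
    x ^ s * u ^ 2 ≤
      2 * (x ^ s * u ^ 2 + 2 / (s + 1) * (x ^ (s + 1) * (u * v))) +
        4 / (s + 1) ^ 2 * (x ^ (s + 2) * v ^ 2) := by
  have hsq : 0 ≤ x ^ s * (u + 2 / (s + 1) * x * v) ^ 2 := by positivity
  rw [Real.rpow_add hx, Real.rpow_add hx, Real.rpow_one, Real.rpow_two]
  have hgap : 2 * (x ^ s * u ^ 2 + 2 / (s + 1) * (x ^ s * x * (u * v))) +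
      4 / (s + 1) ^ 2 * (x ^ s * x ^ 2 * v ^ 2) - x ^ s * u ^ 2 =
      x ^ s * (u + 2 / (s + 1) * x * v) ^ 2 := by
    field_simp
    ring
  linarith

lemma HasDerivAt.rpow_mul_sq_div {f : ℝ → ℝ} {f' s x : ℝ} (hf : HasDerivAt f f' x)
    (hx : x ≠ 0) (hs : s + 1 ≠ 0) :
    HasDerivAt (fun y => y ^ (s + 1) * f y ^ 2 / (s + 1))
      (x ^ s * f x ^ 2 + 2 / (s + 1) * (x ^ (s + 1) * (f x * f'))) x := by
  have h : HasDerivAt (fun y => y ^ (s + 1) * f y ^ 2 / (s + 1)) _ x :=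
    ((Real.hasDerivAt_rpow_const (Or.inl hx)).mul (hf.pow 2)).div_const (s + 1)
  convert h using 1
  rw [add_sub_cancel_right, Pi.pow_apply]
  field_simp
  ring

lemma ContDiffOn.hasDerivAt_derivWithin_Icc {f : ℝ → ℝ} {a b x : ℝ}
    (hf : ContDiffOn ℝ 1 f (Icc a b)) (hx : x ∈ Ioo a b) :
    HasDerivAt f (derivWithin f (Icc a b) x) x :=
  ((hf.differentiableOn one_ne_zero) x (Ioo_subset_Icc_self hx)).hasDerivWithinAt.hasDerivAt
    (Icc_mem_nhds hx.1 hx.2)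

lemma continuousOn_rpow_const_Icc {a b : ℝ} (ha : 0 < a) (p : ℝ) :
    ContinuousOn (fun x : ℝ => x ^ p) (Icc a b) :=
  continuousOn_id.rpow_const fun _ hx => Or.inl (ha.trans_le hx.1).ne'

lemma integral_rpow_mul_sq_add_eq {f : ℝ → ℝ} {s a b : ℝ} (hs : s + 1 ≠ 0) (ha : 0 < a)
    (hab : a < b) (hf : ContDiffOn ℝ 1 f (Icc a b)) :
    ∫ x in a..b, (x ^ s * f x ^ 2 +
        2 / (s + 1) * (x ^ (s + 1) * (f x * derivWithin f (Icc a b) x))) =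
      b ^ (s + 1) * f b ^ 2 / (s + 1) - a ^ (s + 1) * f a ^ 2 / (s + 1) := by
  have hpow := continuousOn_rpow_const_Icc (b := b) ha
  have hF := hf.continuousOn_derivWithin (uniqueDiffOn_Icc hab) le_rfl
  have hfc := hf.continuousOn
  refine intervalIntegral.integral_eq_sub_of_hasDeriv_right_of_le hab.le
    (f := fun x => x ^ (s + 1) * f x ^ 2 / (s + 1)) (by fun_prop) (fun _ hx => ?_)
    (ContinuousOn.intervalIntegrable_of_Icc hab.le (by fun_prop))
  exact ((hf.hasDerivAt_derivWithin_Icc hx).rpow_mul_sq_div (ha.trans hx.1).ne' hs).hasDerivWithinAt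

/-- Hardy inequality near infinity: for `s > -1`, `0 < a < b` and `f` of class `C¹`
on `[a,b]`,
`∫_a^b x^{s} f² ≤ (4/(s+1)²) ∫_a^b x^{s+2} (f')² + (2/(s+1)) b^{s+1} f(b)²`. -/
theorem stmt7 (s a b : ℝ) (hs : -1 < s) (ha : 0 < a) (hab : a < b)
    (f : ℝ → ℝ) (hf : ContDiffOn ℝ 1 f (Set.Icc a b)) :
    (∫ x in a..b, x ^ s * (f x) ^ 2) ≤
      (4 / (s + 1) ^ 2) * (∫ x in a..b, x ^ (s + 2) * (deriv f x) ^ 2) +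
        (2 / (s + 1)) * b ^ (s + 1) * (f b) ^ 2 := by
  have hc : 0 < s + 1 := by linarith
  set F := derivWithin f (Icc a b)
  have hF : ContinuousOn F (Icc a b) := hf.continuousOn_derivWithin (uniqueDiffOn_Icc hab) le_rfl
  have hfc := hf.continuousOn
  have hpow := continuousOn_rpow_const_Icc (b := b) ha
  have hint : ∀ g : ℝ → ℝ, ContinuousOn g (Icc a b) → IntervalIntegrable g volume a b :=
    fun g hg => hg.intervalIntegrable_of_Icc hab.le
  have hderiv : ∫ x in a..b, x ^ (s + 2) * deriv f x ^ 2 = ∫ x in a..b, x ^ (s + 2) * F x ^ 2 :=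
    intervalIntegral.integral_congr_Ioo_of_le hab.le fun x hx => by
      rw [(hf.hasDerivAt_derivWithin_Icc hx).deriv]
  have hmono := intervalIntegral.integral_mono_on hab.le (hint _ (by fun_prop))
    (hint _ (by fun_prop))
    fun x hx => rpow_mul_sq_le_two_mul_add hc.ne' (ha.trans_le hx.1) (f x) (F x)
  rw [intervalIntegral.integral_add (hint _ (by fun_prop)) (hint _ (by fun_prop)),
    intervalIntegral.integral_const_mul, intervalIntegral.integral_const_mul,
    integral_rpow_mul_sq_add_eq hc.ne' ha hab hf] at hmono
  have ha_term : 0 ≤ a ^ (s + 1) * f a ^ 2 / (s + 1) := by positivity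
  have hb_term : 2 / (s + 1) * b ^ (s + 1) * f b ^ 2 = 2 * (b ^ (s + 1) * f b ^ 2 / (s + 1)) := by
    ring
  rw [hderiv, hb_term]
  linarith
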